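/- Let n = 2m and E = {λ ∈ F_{2^n} : λ^{2^m} + λ = 1}. The map σ : E → F_{2^m} given by σ(λ) = λ · λ^{2^m} is two-to-one onto its image, and its image is exactly the set of elements v ∈ F_{2^m} with Tr^m_1(v) = 1. -/

import Mathlib

/-! For `λ ∈ E` we have `λ^(2^m) = λ + 1`, so `σ λ = λ² + λ` is the Artin–Schreier map, whose
fibres are the pairs `{λ, λ + 1}`. Telescoping gives `Tr^m_1 (x² + x) = x^(2^m) + x`, so
`x² + x` has trace `1` exactly when `x ∈ E`. It remains to solve `x² + x = v` in `F_{2^n}` for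
`v ∈ F_{2^m}`; such a `v` has absolute trace `0` over `F_{2^n}`, and the range of the
Artin–Schreier map on `F_{2^n}` is the whole trace-zero set: it has `2^(n-1)` elements, the kernel
being `{0, 1}`, while the trace polynomial has degree `2^(n-1)`. -/

open Finset

section CharTwo

variable {R : Type*} [CommRing R] [CharP R 2]

theorem sum_range_sq_add_self_pow_two_pow (x : R) (k : ℕ) :
    ∑ i ∈ range k, (x ^ 2 + x) ^ 2 ^ i = x ^ 2 ^ k + x := by
  have hterm (i : ℕ) : (x ^ 2 + x) ^ 2 ^ i = x ^ 2 ^ (i + 1) - x ^ 2 ^ i := by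
    rw [add_pow_char_pow, ← pow_mul, ← pow_succ']
    linear_combination x ^ 2 ^ i * CharTwo.two_eq_zero (R := R)
  rw [sum_congr rfl fun i _ => hterm i, sum_range_sub (fun i => x ^ 2 ^ i), pow_zero, pow_one]
  linear_combination -x * CharTwo.two_eq_zero (R := R)

theorem sq_add_self_eq_sq_add_self_iff [NoZeroDivisors R] {x y : R} :
    x ^ 2 + x = y ^ 2 + y ↔ y = x ∨ y = x + 1 := by
  rw [← sub_eq_zero (a := y), ← sub_eq_zero (a := y) (b := x + 1), ← mul_eq_zero]
  constructor <;> intro h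
  · linear_combination h + (y ^ 2 - x * y) * CharTwo.two_eq_zero (R := R)
  · linear_combination h + (x * y - y ^ 2) * CharTwo.two_eq_zero (R := R)

variable (R) in
def artinSchreier : R →+ R where
  toFun x := x ^ 2 + x
  map_zero' := by ring
  map_add' a b := by
    linear_combination a * b * CharTwo.two_eq_zero (R := R)

theorem mem_ker_artinSchreier [NoZeroDivisors R] {x : R} :
    x ∈ (artinSchreier R).ker ↔ x = 0 ∨ x = 1 := by
  have h := sq_add_self_eq_sq_add_self_iff (x := (0 : R)) (y := x)
  rw [AddMonoidHom.mem_ker, show (artinSchreier R) x = x ^ 2 + x from rfl, eq_comm]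
  simpa using h

theorem natCard_ker_artinSchreier [Nontrivial R] [NoZeroDivisors R] :
    Nat.card (artinSchreier R).ker = 2 := by
  rw [Nat.card_congr (Equiv.subtypeEquivRight fun _ => mem_ker_artinSchreier),
    ← Set.ncard_pair (zero_ne_one' R)]
  rfl

theorem sum_range_two_mul_pow_two_pow_eq_zero {v : R} {m : ℕ} (hv : v ^ 2 ^ m = v) :
    ∑ i ∈ range (2 * m), v ^ 2 ^ i = 0 := by
  simp only [two_mul, sum_range_add, pow_add, pow_mul, hv, CharTwo.add_self_eq_zero]

end CharTwo

theorem charP_two_of_card_eq_two_pow {F : Type*} [Field F] [Fintype F] {n : ℕ} (hn : n ≠ 0)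
    (hF : Fintype.card F = 2 ^ n) : CharP F 2 :=
  ringChar.of_eq <| FiniteField.even_card_iff_char_two.2 <| by
    rw [hF, Nat.pow_mod, Nat.mod_self, zero_pow hn, Nat.zero_mod]

theorem card_filter_sum_pow_two_pow_eq_zero_le {R : Type*} [CommRing R] [IsDomain R] [Fintype R]
    [DecidableEq R] (k : ℕ) :
    #{y : R | ∑ i ∈ range (k + 1), y ^ 2 ^ i = 0} ≤ 2 ^ k := by
  open Polynomial in
  set q : R[X] := ∑ i ∈ range k, X ^ 2 ^ i
  have hq : q.degree < (2 ^ k : ℕ) := by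
    refine (degree_sum_le _ _).trans_lt <|
      (Finset.sup_lt_iff (WithBot.bot_lt_coe _)).2 fun i hi => ?_
    rw [degree_X_pow]
    exact_mod_cast Nat.pow_lt_pow_right one_lt_two (mem_range.1 hi)
  have hp : (X ^ 2 ^ k + q).natDegree = 2 ^ k := by
    rw [natDegree_add_eq_left_of_degree_lt (by rwa [degree_X_pow]), natDegree_X_pow]
  rw [← hp]
  refine card_le_degree_of_subset_roots fun y hy => ?_
  rw [mem_roots (monic_X_pow_add hq).ne_zero, IsRoot, eval_add, eval_finsetSum]
  simpa [sum_range_succ, add_comm] using hy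

theorem exists_sq_add_self_eq_iff {F : Type*} [Field F] [Fintype F] [CharP F 2] {n : ℕ}
    (hF : Fintype.card F = 2 ^ n) (y : F) :
    (∃ x, x ^ 2 + x = y) ↔ ∑ i ∈ range n, y ^ 2 ^ i = 0 := by
  classical
  obtain ⟨k, rfl⟩ : ∃ k, n = k + 1 := Nat.exists_eq_succ_of_ne_zero fun h =>
    (Fintype.one_lt_card (α := F)).ne' (by rw [hF, h, pow_zero])
  set T : Set F := {y | ∑ i ∈ range (k + 1), y ^ 2 ^ i = 0}
  have hsub : Set.range (artinSchreier F) ⊆ T := by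
    rintro _ ⟨x, rfl⟩
    show ∑ i ∈ range (k + 1), (x ^ 2 + x) ^ 2 ^ i = 0
    rw [sum_range_sq_add_self_pow_two_pow, ← hF, FiniteField.pow_card, CharTwo.add_self_eq_zero]
  have hrange : 2 * Nat.card (artinSchreier F).range = 2 ^ (k + 1) := by
    have h := AddSubgroup.card_mul_index (artinSchreier F).ker
    rwa [natCard_ker_artinSchreier, AddSubgroup.index_ker, Nat.card_eq_fintype_card (α := F),
      hF] at h
  have hT : T.ncard ≤ 2 ^ k := by
    rw [Set.ncard_eq_toFinset_card', Set.toFinset_ofPred]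
    exact card_filter_sum_pow_two_pow_eq_zero_le k
  have heq : Set.range (artinSchreier F) = T :=
    Set.eq_of_subset_of_ncard_le hsub (by
      rw [← AddMonoidHom.coe_range, ← Nat.card_coe_set_eq]
      change T.ncard ≤ Nat.card (artinSchreier F).range
      omega) T.toFinite
  exact Set.ext_iff.1 heq y

theorem stmt_2 (m : ℕ) (hm : 1 ≤ m) (F : Type*) [Field F] [Fintype F]
    (hF : Fintype.card F = 2 ^ (2 * m)) :
    (∀ v : F, (v ^ 2 ^ m = v ∧ (∑ i ∈ Finset.range m, v ^ 2 ^ i) = 1) ↔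
        ∃ l : F, l ^ 2 ^ m + l = 1 ∧ l * l ^ 2 ^ m = v) ∧
    (∀ l₁ l₂ : F, l₁ ^ 2 ^ m + l₁ = 1 → l₂ ^ 2 ^ m + l₂ = 1 →
        (l₁ * l₁ ^ 2 ^ m = l₂ * l₂ ^ 2 ^ m ↔ l₂ = l₁ ∨ l₂ = l₁ + 1)) := by
  have := charP_two_of_card_eq_two_pow (by omega) hF
  have hσ {l : F} (hl : l ^ 2 ^ m + l = 1) : l * l ^ 2 ^ m = l ^ 2 + l := by
    linear_combination l * hl - l ^ 2 * CharTwo.two_eq_zero (R := F)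
  refine ⟨fun v => ⟨fun ⟨hv, htr⟩ => ?_, fun ⟨l, hl, hlv⟩ => ?_⟩, fun l₁ l₂ h₁ h₂ => ?_⟩
  · obtain ⟨l, rfl⟩ := (exists_sq_add_self_eq_iff hF v).2 (sum_range_two_mul_pow_two_pow_eq_zero hv)
    rw [sum_range_sq_add_self_pow_two_pow] at htr
    exact ⟨l, htr, hσ htr⟩
  · have hl' : l ^ 2 ^ m = l + 1 := by linear_combination hl - l * CharTwo.two_eq_zero (R := F)
    rw [← hlv, hσ hl]
    refine ⟨?_, by rw [sum_range_sq_add_self_pow_two_pow, hl]⟩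
    rw [add_pow_char_pow, ← pow_mul, mul_comm, pow_mul, hl', eq_comm,
      sq_add_self_eq_sq_add_self_iff]
    exact Or.inr rfl
  · rw [hσ h₁, hσ h₂, sq_add_self_eq_sq_add_self_iff]
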